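/- Let h : [0,∞) → (0,∞) be a smooth positive function and assume Conditions (i), (ii) and (iii) hold. Let φ be an entire solution of the radial translating-soliton ODE on (R,∞). Then h(r)·(φ(r) − (c/(n−1))·ξ(r)/ξ'(r)) → 0 as r → ∞; in other words, φ(r) = (c/(n−1))·ξ(r)/ξ'(r) + o(1/h(r)) as r → ∞. -/

import Mathlib

open Filter


open Filter Set Topology

/-- Monotone comparison: if `g' ≥ m` on `[x₀,x₁]` then `g x₁ ≥ g x₀ + m(x₁-x₀)`. -/
lemma my_monoIcc (g g' : ℝ → ℝ) (m x0 x1 : ℝ) (hx : x0 ≤ x1)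
    (hd : ∀ x ∈ Set.Icc x0 x1, HasDerivAt g (g' x) x)
    (hge : ∀ x ∈ Set.Icc x0 x1, m ≤ g' x) :
    g x0 + m * (x1 - x0) ≤ g x1 := by
  have hGd : ∀ x ∈ Set.Icc x0 x1, HasDerivAt (fun y => g y - m * y) (g' x - m) x := by
    intro x hx'
    have h1 : HasDerivAt (fun y : ℝ => m * y) m x := by
      simpa using (hasDerivAt_id x).const_mul m
    exact (hd x hx').sub h1
  have hmono : MonotoneOn (fun y => g y - m * y) (Set.Icc x0 x1) := by
    apply monotoneOn_of_deriv_nonneg (convex_Icc x0 x1)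
    · exact fun x hx' => ((hGd x hx').continuousAt).continuousWithinAt
    · intro x hx'
      rw [interior_Icc] at hx'
      exact ((hGd x (Ioo_subset_Icc_self hx')).differentiableAt).differentiableWithinAt
    · intro x hx'
      rw [interior_Icc] at hx'
      rw [(hGd x (Ioo_subset_Icc_self hx')).deriv]
      linarith [hge x (Ioo_subset_Icc_self hx')]
  have := hmono ⟨le_refl x0, hx⟩ ⟨hx, le_refl x1⟩ hx
  simp only at this
  linarith

/-- Forward invariance of `{g ≥ 0}`: if `g` has positive derivative at every zero,
and starts nonnegative, it stays nonnegative. -/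
lemma stay_nonneg (g g' : ℝ → ℝ) (x0 : ℝ)
    (hd : ∀ x, x0 ≤ x → HasDerivAt g (g' x) x)
    (h0 : 0 ≤ g x0)
    (hz : ∀ x, x0 ≤ x → g x = 0 → 0 < g' x) :
    ∀ x, x0 ≤ x → 0 ≤ g x := by
  intro x1 hx1
  by_contra hneg
  push_neg at hneg
  set S : Set ℝ := {x | x ∈ Set.Icc x0 x1 ∧ 0 ≤ g x} with hS
  have hSne : S.Nonempty := ⟨x0, ⟨le_refl _, hx1⟩, h0⟩
  have hSbdd : BddAbove S := ⟨x1, fun y hy => hy.1.2⟩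
  have hScl : IsClosed S := by
    have hcont : ContinuousOn g (Set.Icc x0 x1) :=
      fun x hx => ((hd x hx.1).continuousAt).continuousWithinAt
    have : S = Set.Icc x0 x1 ∩ g ⁻¹' Set.Ici 0 := by
      ext y; simp [hS, Set.mem_setOf_eq, and_comm]
    rw [this]
    exact hcont.preimage_isClosed_of_isClosed isClosed_Icc isClosed_Ici
  have hmem := hScl.csSup_mem hSne hSbdd
  set m := sSup S with hm
  obtain ⟨⟨hm0, hm1⟩, hgm⟩ := hmem
  have hmx1 : m < x1 := lt_of_le_of_ne hm1 (fun he => absurd (he ▸ hgm) (not_le.mpr hneg))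
  have hnotS : ∀ y, m < y → y ≤ x1 → g y < 0 := by
    intro y hy1 hy2
    by_contra hge'
    push_neg at hge'
    have : y ∈ S := ⟨⟨le_trans hm0 hy1.le, hy2⟩, hge'⟩
    exact absurd (le_csSup hSbdd this) (not_le.mpr hy1)
  have hgm0 : g m = 0 := by
    by_contra hne
    have hpos : 0 < g m := hgm.lt_of_ne (Ne.symm hne)
    have hca : ContinuousAt g m := (hd m hm0).continuousAt
    have h1 : ∀ᶠ y in 𝓝[>] m, 0 < g y :=
      nhdsWithin_le_nhds (hca.eventually (eventually_gt_nhds hpos))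
    have h2 : Set.Ioo m x1 ∈ 𝓝[>] m := Ioo_mem_nhdsGT hmx1
    obtain ⟨y, hy1, hy2, hy3⟩ := (h1.and h2).exists
    exact absurd hy1 (not_lt.mpr (hnotS y hy2 hy3.le).le)
  have hd' := hz m hm0 hgm0
  have hslope := hasDerivAt_iff_tendsto_slope.mp (hd m hm0)
  have h1 : ∀ᶠ y in 𝓝[≠] m, 0 < slope g m y :=
    hslope.eventually (eventually_gt_nhds hd')
  have h1' : ∀ᶠ y in 𝓝[>] m, 0 < slope g m y :=
    h1.filter_mono (nhdsWithin_mono m (fun y hy => ne_of_gt hy))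
  have h2 : Set.Ioo m x1 ∈ 𝓝[>] m := Ioo_mem_nhdsGT hmx1
  obtain ⟨y, hy1, hy2, hy3⟩ := (h1'.and h2).exists
  have hsl : slope g m y = g y / (y - m) := by
    rw [slope_def_field, hgm0, sub_zero]
  rw [hsl] at hy1
  have : 0 < g y := by
    have := mul_pos hy1 (show (0:ℝ) < y - m by linarith)
    rwa [div_mul_cancel₀ _ (by linarith : y - m ≠ 0)] at this
  linarith [hnotS y hy2 hy3.le]

/-- `min (max 1 x²) (max x x⁻¹) = max x 1` for `x > 0`. -/
lemma minmax_eq (x : ℝ) (hx : 0 < x) :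
    min (max 1 (x^2)) (max x x⁻¹) = max x 1 := by
  rcases le_total x 1 with hx1 | hx1
  · have h1 : x^2 ≤ 1 := by nlinarith
    have h2 : 1 ≤ x⁻¹ := one_le_inv_iff₀.mpr ⟨hx, hx1⟩
    have h3 : x ≤ x⁻¹ := le_trans hx1 h2
    rw [max_eq_left h1, max_eq_right h3, max_eq_right hx1]
    exact min_eq_left h2
  · have h1 : 1 ≤ x^2 := by nlinarith
    have h2 : x⁻¹ ≤ 1 := inv_le_one_of_one_le₀ hx1
    have h3 : x⁻¹ ≤ x := le_trans h2 hx1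
    rw [max_eq_right h1, max_eq_left h3, max_eq_left hx1]
    have : x ≤ x^2 := by nlinarith
    exact min_eq_right this

set_option maxHeartbeats 2000000 in
/-- Let `n ≥ 2`, `c > 0`, and let `ξ` be a warping function of a
rotationally symmetric Cartan–Hadamard manifold (`ξ 0 = 0`, `ξ' 0 = 1`, `ξ'' ≥ 0`,
hence `ξ > 0` and `ξ' ≥ 1` on `(0,∞)`).  Let `h` be a smooth positive function and
assume Conditions (i), (ii), (iii).  Let `φ` be an entire solution on `(R,∞)` of the
radial translating-soliton ODE `φ' = (1 + φ²)(c − (n−1)(ξ'/ξ)φ)`.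
Then `h(r)·(φ(r) − (c/(n−1))·ξ(r)/ξ'(r)) → 0` as `r → ∞`, i.e.
`φ(r) = (c/(n−1))·ξ(r)/ξ'(r) + o(1/h(r))`. -/
theorem soliton_ode_refined_asymptotics
    (n : ℕ) (hn : 2 ≤ n) (c : ℝ) (hc : 0 < c)
    (ξ : ℝ → ℝ) (hξ_smooth : ContDiff ℝ (⊤ : ℕ∞) ξ)
    (hξ0 : ξ 0 = 0) (hξ'0 : deriv ξ 0 = 1)
    (hξ'' : ∀ r, 0 ≤ r → 0 ≤ deriv (deriv ξ) r)
    (hξ_pos : ∀ r, 0 < r → 0 < ξ r)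
    (hξ'_ge : ∀ r, 0 < r → 1 ≤ deriv ξ r)
    (h : ℝ → ℝ) (hh_smooth : ContDiff ℝ (⊤ : ℕ∞) h)
    (hh_pos : ∀ r, 0 ≤ r → 0 < h r)
    (hcondi : Tendsto (fun r =>
      deriv (fun s => ξ s / deriv ξ s) r /
        min (max 1 ((ξ r / deriv ξ r)^2)) (max (ξ r / deriv ξ r) (deriv ξ r / ξ r)))
      atTop (nhds 0))
    (hcondii : Tendsto (fun r =>
      h r * deriv (fun s => ξ s / deriv ξ s) r /
        max (ξ r / deriv ξ r) (deriv ξ r / ξ r))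
      atTop (nhds 0))
    (hcondiii : Tendsto (fun r =>
      (deriv h r / h r) / max (deriv ξ r / ξ r) (ξ r / deriv ξ r))
      atTop (nhds 0))
    (φ : ℝ → ℝ) (R : ℝ) (hR : 0 ≤ R)
    (hode : ∀ r, R < r →
      HasDerivAt φ ((1 + (φ r)^2) * (c - ((n : ℝ) - 1) * (deriv ξ r / ξ r) * φ r)) r) :
    Tendsto (fun r => h r * (φ r - (c / ((n : ℝ) - 1)) * (ξ r / deriv ξ r)))
      atTop (nhds 0) := by
  -- basic constants
  have hn2 : (2:ℝ) ≤ (n:ℝ) := by exact_mod_cast hn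
  have hn1 : (1:ℝ) ≤ (n:ℝ) - 1 := by linarith
  have hn0 : ((n:ℝ) - 1) ≠ 0 := by linarith
  obtain ⟨b, hbdef⟩ : ∃ b : ℝ, b = c / ((n:ℝ) - 1) := ⟨_, rfl⟩
  rw [← hbdef]
  have hb : 0 < b := by rw [hbdef]; exact div_pos hc (by linarith)
  have hbc : ((n:ℝ) - 1) * b = c := by rw [hbdef]; field_simp
  set f : ℝ → ℝ := fun s => ξ s / deriv ξ s with hfdef
  -- differentiability
  have hξd : Differentiable ℝ ξ := hξ_smooth.differentiable (by simp)
  have hξ'd : Differentiable ℝ (deriv ξ) := by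
    have h1 : ContDiff ℝ ((⊤ : ℕ∞) : WithTop ℕ∞) ξ := hξ_smooth.of_le (by simp)
    exact (contDiff_infty_iff_deriv.mp h1).2.differentiable (by simp)
  have hξ'pos : ∀ r : ℝ, 0 < r → 0 < deriv ξ r := fun r hr => by linarith [hξ'_ge r hr]
  have hfpos : ∀ r : ℝ, 0 < r → 0 < f r := fun r hr =>
    div_pos (hξ_pos r hr) (hξ'pos r hr)
  have hinv : ∀ r : ℝ, (f r)⁻¹ = deriv ξ r / ξ r := fun r => inv_div _ _
  have hfD : ∀ r : ℝ, 0 < r → HasDerivAt f (deriv f r) r := fun r hr =>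
    (((hξd r).div (hξ'd r) (ne_of_gt (hξ'pos r hr)))).hasDerivAt
  have hhd : Differentiable ℝ h := hh_smooth.differentiable (by simp)
  have hhD : ∀ r : ℝ, HasDerivAt h (deriv h r) r := fun r => (hhd r).hasDerivAt
  -- rewritten conditions
  have hcondi' : Tendsto (fun r => deriv f r / max (f r) 1) atTop (nhds 0) := by
    apply Tendsto.congr' _ hcondi
    filter_upwards [eventually_gt_atTop (0:ℝ)] with r hr
    show deriv f r / min (max 1 ((f r)^2)) (max (f r) (deriv ξ r / ξ r))
      = deriv f r / max (f r) 1
    rw [← hinv r, minmax_eq (f r) (hfpos r hr)]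
  have hcondii' : Tendsto (fun r => h r * deriv f r / max (f r) (f r)⁻¹) atTop (nhds 0) := by
    apply Tendsto.congr' _ hcondii
    filter_upwards [eventually_gt_atTop (0:ℝ)] with r hr
    show h r * deriv f r / max (f r) (deriv ξ r / ξ r)
      = h r * deriv f r / max (f r) (f r)⁻¹
    rw [← hinv r]
  have hcondiii' : Tendsto (fun r => (deriv h r / h r) / max (f r) (f r)⁻¹) atTop (nhds 0) := by
    apply Tendsto.congr' _ hcondiii
    filter_upwards [eventually_gt_atTop (0:ℝ)] with r hr
    show deriv h r / h r / max (deriv ξ r / ξ r) (f r)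
      = deriv h r / h r / max (f r) (f r)⁻¹
    rw [← hinv r, max_comm ((f r)⁻¹) (f r)]
  -- extraction of eventual bounds
  have extract : ∀ g d : ℝ → ℝ, Tendsto (fun r => g r / d r) atTop (nhds 0) →
      ∀ ε : ℝ, 0 < ε → ∃ r0 : ℝ, ∀ r, r0 ≤ r → 0 < d r → |g r| < ε * d r := by
    intro g d hT ε hε
    have h1 := NormedAddCommGroup.tendsto_nhds_zero.mp hT ε hε
    rw [eventually_atTop] at h1
    obtain ⟨N, hN⟩ := h1
    refine ⟨N, fun r hr hd => ?_⟩
    have h2 := hN r hr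
    rw [Real.norm_eq_abs, abs_div, abs_of_pos hd] at h2
    exact (div_lt_iff₀ hd).mp h2
  -- constants
  obtain ⟨a, hadef⟩ : ∃ a : ℝ, a = c / 2 := ⟨_, rfl⟩
  have ha : 0 < a := by rw [hadef]; linarith
  obtain ⟨δ, hδdef⟩ : ∃ d : ℝ, d = b / 2 := ⟨_, rfl⟩
  have hδ : 0 < δ := by rw [hδdef]; linarith
  have hδc : ((n:ℝ) - 1) * δ = a := by rw [hδdef, hbdef, hadef]; field_simp
  obtain ⟨κ, hκdef⟩ : ∃ k : ℝ, k = min 1 (δ^2) := ⟨_, rfl⟩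
  have hκpos : 0 < κ := by rw [hκdef]; exact lt_min one_pos (by positivity)
  obtain ⟨lam, hlamdef⟩ : ∃ l : ℝ, l = κ * ((n:ℝ) - 1) / 2 := ⟨_, rfl⟩
  have hlam : 0 < lam := by rw [hlamdef]; positivity
  -- condition (i) bound with fixed ε0
  obtain ⟨ε0, hε0def⟩ : ∃ e : ℝ, e = a * min 1 δ⁻¹ := ⟨_, rfl⟩
  have hε0 : 0 < ε0 := by
    rw [hε0def]; exact mul_pos ha (lt_min one_pos (inv_pos.mpr hδ))
  obtain ⟨ri, hri⟩ := extract (deriv f) (fun r => max (f r) 1) hcondi' ε0 hε0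
  set R1 := max (max (R + 1) 1) ri with hR1def
  have hR1pos : ∀ r : ℝ, R1 ≤ r → 0 < r := fun r hr => by
    have : (1:ℝ) ≤ R1 := le_trans (le_max_right _ _) (le_max_left _ _)
    linarith
  have hR1R : ∀ r : ℝ, R1 ≤ r → R < r := fun r hr => by
    have : R + 1 ≤ R1 := le_trans (le_max_left _ _) (le_max_left _ _)
    linarith
  have hFdbd : ∀ r : ℝ, R1 ≤ r → |deriv f r| < ε0 * max (f r) 1 := fun r hr =>
    hri r (le_trans (le_max_right _ _) hr) (lt_of_lt_of_le one_pos (le_max_right _ _))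
  set Φ : ℝ → ℝ := fun r => (1 + (φ r)^2) * (c - ((n:ℝ) - 1) * (deriv ξ r / ξ r) * φ r)
    with hΦdef
  have hodeΦ : ∀ r : ℝ, R1 ≤ r → HasDerivAt φ (Φ r) r := fun r hr => hode r (hR1R r hr)
  -- lower bound on Φ in the region φ < δ f
  have hΦlow : ∀ r : ℝ, R1 ≤ r → φ r < δ * f r → a * (1 + (φ r)^2) ≤ Φ r := by
    intro r hr hlt
    have hm : 0 < f r := hfpos r (hR1pos r hr)
    have hPf : f r * (f r)⁻¹ = 1 := mul_inv_cancel₀ (ne_of_gt hm)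
    have h2 : (f r)⁻¹ * φ r < δ := by
      have h3 := mul_lt_mul_of_pos_left hlt (inv_pos.mpr hm)
      have h4 : (f r)⁻¹ * (δ * f r) = δ := by field_simp
      rw [h4] at h3
      exact h3
    have h4 : a ≤ c - ((n:ℝ) - 1) * (f r)⁻¹ * φ r := by
      have h5 := mul_lt_mul_of_pos_left h2 (show (0:ℝ) < (n:ℝ)-1 by linarith)
      rw [hδc] at h5
      have hca : c = a + a := by rw [hadef]; ring
      linarith
    have h6 : (0:ℝ) ≤ 1 + (φ r)^2 := by positivity
    have h7 := mul_le_mul_of_nonneg_left h4 h6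
    simp only [hΦdef]
    rw [← hinv r]
    linarith [h7]
  -- derivative sign on the barrier φ = δ f
  have hbarrier : ∀ r : ℝ, R1 ≤ r → φ r = δ * f r → 0 < Φ r - δ * deriv f r := by
    intro r hr heq
    have hm : 0 < f r := hfpos r (hR1pos r hr)
    have hPf : f r * (f r)⁻¹ = 1 := mul_inv_cancel₀ (ne_of_gt hm)
    have habs := hFdbd r hr
    have hΦeq : Φ r = (1 + δ^2 * (f r)^2) * a := by
      simp only [hΦdef]
      rw [← hinv r, heq]
      have h1 : ((n:ℝ) - 1) * (f r)⁻¹ * (δ * f r) = a := by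
        have h1a : ((n:ℝ) - 1) * (f r)⁻¹ * (δ * f r)
            = ((n:ℝ)-1) * δ * (f r * (f r)⁻¹) := by ring
        rw [h1a, hPf, mul_one, hδc]
      rw [h1]
      have hca : c - a = a := by rw [hadef]; ring
      rw [hca]; ring
    rw [hΦeq]
    have h1 : δ * deriv f r ≤ δ * |deriv f r| :=
      mul_le_mul_of_nonneg_left (le_abs_self _) hδ.le
    have h2 : δ * |deriv f r| < δ * (ε0 * max (f r) 1) := mul_lt_mul_of_pos_left habs hδ
    rcases le_total (f r) 1 with hf1 | hf1
    · rw [max_eq_right hf1] at h2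
      have hmin : δ * (ε0 * 1) ≤ a := by
        have h3 : min 1 δ⁻¹ ≤ δ⁻¹ := min_le_right _ _
        have hdd : δ * δ⁻¹ = 1 := mul_inv_cancel₀ hδ.ne'
        rw [hε0def]
        have h4 : δ * min 1 δ⁻¹ ≤ 1 := by
          have h5 := mul_le_mul_of_nonneg_left h3 hδ.le
          rw [hdd] at h5
          exact h5
        have h6 := mul_le_mul_of_nonneg_left h4 ha.le
        linarith only [h6]
      linarith [h1, h2, hmin, mul_nonneg ha.le (sq_nonneg (δ * f r))]
    · rw [max_eq_left hf1] at h2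
      have key : δ * (ε0 * f r) ≤ (1 + δ^2 * (f r)^2) * a := by
        have h3 : min 1 δ⁻¹ ≤ 1 := min_le_left _ _
        have hfr : (0:ℝ) < f r := hm
        rw [hε0def]
        have h4 : δ * (a * min 1 δ⁻¹ * f r) ≤ δ * (a * 1 * f r) := by
          apply mul_le_mul_of_nonneg_left _ hδ.le
          apply mul_le_mul_of_nonneg_right _ hfr.le
          exact mul_le_mul_of_nonneg_left h3 ha.le
        have h5 : 2 * (δ * f r) ≤ 1 + δ^2 * (f r)^2 := by
          linarith only [sq_nonneg (1 - δ * f r)]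
        have h6 := mul_le_mul_of_nonneg_left h5 ha.le
        have h7 : (0:ℝ) ≤ a * (1 + δ^2 * (f r)^2) :=
          mul_nonneg ha.le (by positivity)
        linarith [h4, h6, h7]
      linarith
  -- Step A: φ eventually gets above the barrier
  have hA : ∃ r1 : ℝ, R1 ≤ r1 ∧ δ * f r1 ≤ φ r1 := by
    by_contra hcon
    push_neg at hcon
    have hΦa : ∀ x : ℝ, R1 ≤ x → a * (1 + (φ x)^2) ≤ Φ x := fun x hx =>
      hΦlow x hx (hcon x hx)
    have hmono1 : ∀ x0 x1 : ℝ, R1 ≤ x0 → x0 ≤ x1 → φ x0 + a * (x1 - x0) ≤ φ x1 := by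
      intro x0 x1 hx0 hx1
      apply my_monoIcc φ Φ a x0 x1 hx1
      · exact fun x hx => hodeΦ x (le_trans hx0 hx.1)
      · intro x hx
        have h1 := hΦa x (le_trans hx0 hx.1)
        linarith [h1, mul_nonneg ha.le (sq_nonneg (φ x))]
    set r1 := R1 + (1 + |1 - φ R1|) / a with hr1def
    have hpos1 : 0 < (1 + |1 - φ R1|) / a := div_pos (by positivity) ha
    have hr1R1 : R1 ≤ r1 := by rw [hr1def]; linarith
    have hφr1 : 1 ≤ φ r1 := by
      have h5 := hmono1 R1 r1 (le_refl _) hr1R1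
      have he : a * ((1 + |1 - φ R1|) / a) = 1 + |1 - φ R1| := by field_simp
      rw [show r1 - R1 = (1 + |1 - φ R1|) / a from by rw [hr1def]; ring, he] at h5
      linarith [le_abs_self (1 - φ R1)]
    have hφmono : ∀ x : ℝ, r1 ≤ x → 1 ≤ φ x := by
      intro x hx
      have h1 := hmono1 r1 x hr1R1 hx
      linarith [h1, mul_nonneg ha.le (sub_nonneg.mpr hx)]
    set x2 := r1 + 2 / a with hx2def
    have hx2 : r1 ≤ x2 := by
      have : 0 < 2 / a := div_pos two_pos ha
      rw [hx2def]; linarith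
    have hη := my_monoIcc (fun s => -(φ s)⁻¹) (fun s => Φ s / (φ s)^2) a r1 x2 hx2 ?_ ?_
    rotate_left
    · intro x hx
      have hφx : 1 ≤ φ x := hφmono x hx.1
      have hne : φ x ≠ 0 := by linarith
      have hd := ((hodeΦ x (le_trans hr1R1 hx.1)).inv hne).neg
      have : -(-Φ x / φ x ^ 2) = Φ x / (φ x)^2 := by ring
      rw [this] at hd
      exact hd
    · intro x hx
      have hφx : 1 ≤ φ x := hφmono x hx.1
      have hx' : R1 ≤ x := le_trans hr1R1 hx.1
      have hlow := hΦa x hx'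
      rw [le_div_iff₀ (by positivity : (0:ℝ) < (φ x)^2)]
      linarith [hlow, ha]
    have h6 : x2 - r1 = 2 / a := by rw [hx2def]; ring
    have h7 : a * (2 / a) = 2 := by field_simp
    rw [h6, h7] at hη
    have hη2 : -(φ r1)⁻¹ + 2 ≤ -(φ x2)⁻¹ := hη
    have h8 : (φ r1)⁻¹ ≤ 1 := inv_le_one_of_one_le₀ hφr1
    have h9 : 0 < (φ x2)⁻¹ := inv_pos.mpr (by linarith [hφmono x2 hx2])
    linarith [hη2, h8, h9]
  obtain ⟨r1, hr1R1, hr1φ⟩ := hA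
  -- Step A': the barrier region is forward invariant
  have hAinv : ∀ r : ℝ, r1 ≤ r → δ * f r ≤ φ r := by
    have hst := stay_nonneg (fun r => φ r - δ * f r) (fun r => Φ r - δ * deriv f r) r1
      (fun x hx => (hodeΦ x (le_trans hr1R1 hx)).sub
        ((hfD x (hR1pos x (le_trans hr1R1 hx))).const_mul δ))
      (by simpa using hr1φ)
      (fun x hx hz => hbarrier x (le_trans hr1R1 hx) (by linarith [sub_eq_zero.mp hz]))
    intro r hr
    have := hst r hr
    linarith
  -- Step B: decay of u = h·(φ - b f)
  show Tendsto (fun r => h r * (φ r - b * f r)) atTop (nhds 0)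
  rw [NormedAddCommGroup.tendsto_nhds_zero]
  intro ε hε
  obtain ⟨ε', hε'def⟩ : ∃ e : ℝ, e = ε / 3 := ⟨_, rfl⟩
  have hε' : 0 < ε' := by rw [hε'def]; linarith
  obtain ⟨ε₂, hε₂def⟩ : ∃ e : ℝ, e = ε' * lam / b := ⟨_, rfl⟩
  have hε₂ : 0 < ε₂ := by rw [hε₂def]; positivity
  obtain ⟨r2a, h2a⟩ := extract (fun r => h r * deriv f r)
    (fun r => max (f r) (f r)⁻¹) hcondii' ε₂ hε₂
  obtain ⟨r3a, h3a⟩ := extract (fun r => deriv h r / h r)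
    (fun r => max (f r) (f r)⁻¹) hcondiii' lam hlam
  set rB := max r1 (max r2a r3a) with hrBdef
  have hrBr1 : r1 ≤ rB := le_max_left _ _
  have hrBR1 : ∀ r : ℝ, rB ≤ r → R1 ≤ r := fun r hr => le_trans hr1R1 (le_trans hrBr1 hr)
  set u : ℝ → ℝ := fun r => h r * (φ r - b * f r) with hudef
  set Du : ℝ → ℝ := fun r =>
    deriv h r * (φ r - b * f r) + h r * (Φ r - b * deriv f r) with hDudef
  have hUD : ∀ r : ℝ, rB ≤ r → HasDerivAt u (Du r) r := fun r hr =>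
    (hhD r).mul ((hodeΦ r (hrBR1 r hr)).sub
      ((hfD r (hR1pos r (hrBR1 r hr))).const_mul b))
  have hkey : ∀ r : ℝ, rB ≤ r →
      (2 * ε' ≤ u r → Du r ≤ -(lam * ε')) ∧ (u r ≤ -(2 * ε') → lam * ε' ≤ Du r) := by
    intro r hr
    have hrpos : 0 < r := hR1pos r (hrBR1 r hr)
    have hm : 0 < f r := hfpos r hrpos
    have hminv : 0 < (f r)⁻¹ := inv_pos.mpr hm
    have hmax1 : 1 ≤ max (f r) (f r)⁻¹ := by
      rcases le_total (f r) 1 with h' | h'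
      · exact le_max_of_le_right (one_le_inv_iff₀.mpr ⟨hm, h'⟩)
      · exact le_max_of_le_left h'
    have hmaxpos : 0 < max (f r) (f r)⁻¹ := lt_of_lt_of_le one_pos hmax1
    obtain ⟨M, hMdef⟩ : ∃ M : ℝ, M = max (f r) (f r)⁻¹ := ⟨_, rfl⟩
    have hM1 : 1 ≤ M := by rw [hMdef]; exact hmax1
    have hMpos : 0 < M := lt_of_lt_of_le one_pos hM1
    have hH : 0 < h r := hh_pos r hrpos.le
    have hφr : δ * f r ≤ φ r := hAinv r (le_trans hrBr1 hr)
    have hφpos : 0 < φ r := lt_of_lt_of_le (mul_pos hδ hm) hφr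
    have hFdb : |h r * deriv f r| < ε₂ * M := by
      rw [hMdef]
      exact h2a r (le_trans (le_trans (le_max_left _ _) (le_max_right r1 _)) hr) hmaxpos
    have hh'b : |deriv h r| < lam * M * h r := by
      have h4 := h3a r (le_trans (le_trans (le_max_right _ _) (le_max_right r1 _)) hr) hmaxpos
      rw [abs_div, abs_of_pos hH, div_lt_iff₀ hH] at h4
      rw [hMdef]
      exact h4
    have hPf : f r * (f r)⁻¹ = 1 := mul_inv_cancel₀ (ne_of_gt hm)
    have hkeyineq : κ * M ≤ (1 + (φ r)^2) * (f r)⁻¹ := by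
      rcases le_total (f r) ((f r)⁻¹) with hcm | hcm
      · rw [hMdef, max_eq_right hcm]
        have h1 : κ ≤ 1 := by rw [hκdef]; exact min_le_left _ _
        have h2 : κ ≤ 1 + (φ r)^2 := by linarith only [h1, sq_nonneg (φ r)]
        exact mul_le_mul_of_nonneg_right h2 hminv.le
      · rw [hMdef, max_eq_left hcm]
        have h1 : κ ≤ δ^2 := by rw [hκdef]; exact min_le_right _ _
        have h2 : δ * f r * (δ * f r) ≤ φ r * φ r :=
          mul_le_mul hφr hφr (mul_pos hδ hm).le (le_trans (mul_pos hδ hm).le hφr)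
        have h3 : κ * (f r)^2 ≤ 1 + (φ r)^2 := by
          have h3a := mul_le_mul_of_nonneg_right h1 (sq_nonneg (f r))
          linarith only [h3a, h2]
        have h4 := mul_le_mul_of_nonneg_right h3 (le_of_lt hminv)
        have h5 : κ * (f r)^2 * (f r)⁻¹ = κ * f r := by
          field_simp
        linarith [h4, h5]
    have hAgeq : 2 * lam * M ≤ ((n:ℝ) - 1) * ((1 + (φ r)^2) * (f r)⁻¹) := by
      have h1 := mul_le_mul_of_nonneg_left hkeyineq (show (0:ℝ) ≤ (n:ℝ)-1 by linarith)
      have h2 : 2 * lam * M = ((n:ℝ) - 1) * (κ * M) := by rw [hlamdef]; ring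
      linarith
    have hDu_eq : Du r = (φ r - b * f r) *
        (deriv h r - h r * (((n:ℝ) - 1) * ((1 + (φ r)^2) * (f r)⁻¹)))
        - b * (h r * deriv f r) := by
      have hgen : ∀ m Fd : ℝ, m * m⁻¹ = 1 →
          deriv h r * (φ r - b * m) + h r * ((1 + (φ r)^2) *
            (((n:ℝ)-1) * b - ((n:ℝ)-1) * m⁻¹ * φ r) - b * Fd)
          = (φ r - b * m) * (deriv h r - h r * (((n:ℝ)-1) * ((1 + (φ r)^2) * m⁻¹)))
            - b * (h r * Fd) := by
        intro m Fd hmPf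
        linear_combination (-(h r) * (1 + (φ r)^2) * ((n:ℝ) - 1) * b) * hmPf
      simp only [hDudef, hΦdef]
      rw [← hinv r, ← hbc]
      exact hgen (f r) (deriv f r) hPf
    have hbr : deriv h r - h r * (((n:ℝ) - 1) * ((1 + (φ r)^2) * (f r)⁻¹))
        ≤ -(lam * M * h r) := by
      have h1 : deriv h r ≤ lam * M * h r := le_of_lt (lt_of_le_of_lt (le_abs_self _) hh'b)
      have h2 := mul_le_mul_of_nonneg_left hAgeq hH.le
      linarith only [h1, h2]
    have h63M : b * (ε₂ * M) = ε' * lam * M := by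
      rw [hε₂def]
      field_simp
    have h7a := mul_le_mul_of_nonneg_left (neg_le_abs (h r * deriv f r)) hb.le
    have h7b := mul_le_mul_of_nonneg_left (le_abs_self (h r * deriv f r)) hb.le
    have h8 := mul_le_mul_of_nonneg_left (le_of_lt hFdb) hb.le
    constructor
    · intro hu
      have h0 : 0 < h r * (φ r - b * f r) := lt_of_lt_of_le (by linarith) hu
      have hψ : 0 < φ r - b * f r := by
        rcases mul_pos_iff.mp h0 with ⟨_, hp⟩ | ⟨hp, _⟩
        · exact hp
        · linarith
      have h3 := mul_le_mul_of_nonneg_left hbr hψ.le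
      have h5 : lam * M * (2 * ε') ≤ lam * M * (h r * (φ r - b * f r)) :=
        mul_le_mul_of_nonneg_left hu (by positivity)
      rw [hDu_eq]
      linarith only [h3, h5, h7a, h8, h63M,
        mul_nonneg (mul_nonneg hlam.le hε'.le) (sub_nonneg.mpr hM1)]
    · intro hu
      have h0 : h r * (φ r - b * f r) < 0 := lt_of_le_of_lt hu (by linarith)
      have hψ : φ r - b * f r < 0 := by
        rcases mul_neg_iff.mp h0 with ⟨_, hp⟩ | ⟨hp, _⟩
        · exact hp
        · linarith
      have h3 := mul_le_mul_of_nonpos_left hbr hψ.le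
      have h5 : lam * M * (h r * (φ r - b * f r)) ≤ lam * M * (-(2 * ε')) :=
        mul_le_mul_of_nonneg_left hu (by positivity)
      rw [hDu_eq]
      linarith only [h3, h5, h7b, h8, h63M,
        mul_nonneg (mul_nonneg hlam.le hε'.le) (sub_nonneg.mpr hM1)]
  -- upper bound eventually
  have hupper : ∃ r4 : ℝ, rB ≤ r4 ∧ ∀ r, r4 ≤ r → u r ≤ 2 * ε' := by
    have hent : ∃ r4 : ℝ, rB ≤ r4 ∧ u r4 ≤ 2 * ε' := by
      by_contra hcon
      push_neg at hcon
      set x1 := rB + u rB / (lam * ε') with hx1def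
      have hposu : 0 < u rB := lt_trans (by positivity) (hcon rB (le_refl _))
      have hx1ge : rB ≤ x1 := by
        have : 0 < u rB / (lam * ε') := div_pos hposu (by positivity)
        rw [hx1def]; linarith
      have hmm := my_monoIcc (fun s => -(u s)) (fun s => -(Du s)) (lam * ε') rB x1 hx1ge
        (fun x hx => (hUD x hx.1).neg)
        (fun x hx => by
          have h9 := (hkey x hx.1).1 (le_of_lt (hcon x hx.1))
          show lam * ε' ≤ -(Du x)
          linarith)
      have he : lam * ε' * (u rB / (lam * ε')) = u rB := by field_simp
      rw [show x1 - rB = u rB / (lam * ε') from by rw [hx1def]; ring, he] at hmm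
      have hmm2 : -(u rB) + u rB ≤ -(u x1) := hmm
      have h10 := hcon x1 hx1ge
      linarith
    obtain ⟨r4, hr4, hu4⟩ := hent
    refine ⟨r4, hr4, ?_⟩
    have hst := stay_nonneg (fun s => 2 * ε' - u s) (fun s => -(Du s)) r4
      (fun x hx => by
        have hd := ((hasDerivAt_const x (2 * ε')).sub (hUD x (le_trans hr4 hx)))
        rw [zero_sub] at hd
        exact hd)
      (by show (0:ℝ) ≤ 2 * ε' - u r4; linarith)
      (fun x hx hz => by
        have hz' : 2 * ε' - u x = 0 := hz
        have h9 := (hkey x (le_trans hr4 hx)).1 (by linarith)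
        have hp : 0 < lam * ε' := by positivity
        show (0:ℝ) < -(Du x)
        linarith)
    intro r hr
    have h9 : 0 ≤ 2 * ε' - u r := hst r hr
    linarith
  -- lower bound eventually
  have hlower : ∃ r5 : ℝ, rB ≤ r5 ∧ ∀ r, r5 ≤ r → -(2 * ε') ≤ u r := by
    have hent : ∃ r5 : ℝ, rB ≤ r5 ∧ -(2 * ε') ≤ u r5 := by
      by_contra hcon
      push_neg at hcon
      set x1 := rB + (-(u rB)) / (lam * ε') with hx1def
      have hposu : 0 < -(u rB) := by
        have := hcon rB (le_refl _)
        linarith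
      have hx1ge : rB ≤ x1 := by
        have : 0 < (-(u rB)) / (lam * ε') := div_pos hposu (by positivity)
        rw [hx1def]; linarith
      have hmm := my_monoIcc u Du (lam * ε') rB x1 hx1ge
        (fun x hx => hUD x hx.1)
        (fun x hx => by
          have h9 := (hkey x hx.1).2 (le_of_lt (hcon x hx.1))
          linarith)
      have he : lam * ε' * ((-(u rB)) / (lam * ε')) = -(u rB) := by field_simp
      rw [show x1 - rB = (-(u rB)) / (lam * ε') from by rw [hx1def]; ring, he] at hmm
      have h10 := hcon x1 hx1ge
      linarith
    obtain ⟨r5, hr5, hu5⟩ := hent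
    refine ⟨r5, hr5, ?_⟩
    have hst := stay_nonneg (fun s => u s + 2 * ε') Du r5
      (fun x hx => by
        have hd := (hUD x (le_trans hr5 hx)).add_const (2 * ε')
        simpa using hd)
      (by show (0:ℝ) ≤ u r5 + 2 * ε'; linarith)
      (fun x hx hz => by
        have hz' : u x + 2 * ε' = 0 := hz
        have h9 := (hkey x (le_trans hr5 hx)).2 (by linarith)
        have hp : 0 < lam * ε' := by positivity
        linarith)
    intro r hr
    have h9 : 0 ≤ u r + 2 * ε' := hst r hr
    linarith
  obtain ⟨r4, _, hu4⟩ := hupper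
  obtain ⟨r5, _, hu5⟩ := hlower
  filter_upwards [eventually_ge_atTop (max r4 r5)] with r hr
  have h1 := hu4 r (le_trans (le_max_left _ _) hr)
  have h2 := hu5 r (le_trans (le_max_right _ _) hr)
  show ‖u r‖ < ε
  rw [Real.norm_eq_abs, abs_lt]
  constructor
  · rw [hε'def] at h2; linarith
  · rw [hε'def] at h1; linarith
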